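/- arXiv:1911.06132 — 4 statements merged into one kernel-verified Lean document; each statement's English description precedes it below -/
import Mathlib

section
/- Let n ≥ 1 and let w : Fin n → Fin n → EReal be a weight matrix all of whose entries lie in {−1, 0, 1, ⊤}, and suppose d_w(i,j) is finite (a real number, necessarily an integer) for some pair i, j. Then there exists a walk from i to j with at most n² hops whose weight equals d_w(i,j); in particular a shortest walk from i to j exists. -/
open scoped BigOperators

namespace MinMaxAPSP

/-- `p` is a walk from `i` to `j` with `ℓ` hops in the graph with weight matrix `w`
(an ordered pair is an edge iff its weight is not `⊤`). -/
def IsWalk {n : ℕ} (w : Fin n → Fin n → EReal) (i j : Fin n) (ℓ : ℕ)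
    (p : Fin (ℓ+1) → Fin n) : Prop :=
  p 0 = i ∧ p (Fin.last ℓ) = j ∧ ∀ k : Fin ℓ, w (p k.castSucc) (p k.succ) ≠ ⊤

/-- The weight of a walk with `ℓ` hops. -/
noncomputable def walkWeight {n : ℕ} (w : Fin n → Fin n → EReal) (ℓ : ℕ)
    (p : Fin (ℓ+1) → Fin n) : EReal :=
  ∑ k : Fin ℓ, w (p k.castSucc) (p k.succ)

/-- The distance from `i` to `j`: the infimum of the weights of all walks from `i` to `j`
(`⊤` if there is no walk). -/
noncomputable def dist {n : ℕ} (w : Fin n → Fin n → EReal) (i j : Fin n) : EReal :=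
  sInf {x : EReal | ∃ ℓ, ∃ p : Fin (ℓ+1) → Fin n, IsWalk w i j ℓ p ∧ walkWeight w ℓ p = x}

/-- The infimum of the weights of all walks from `i` to `j` with at most `δ` hops
(`⊤` if there is no such walk). -/
noncomputable def distLE {n : ℕ} (w : Fin n → Fin n → EReal) (δ : ℕ) (i j : Fin n) : EReal :=
  sInf {x : EReal | ∃ ℓ ≤ δ, ∃ p : Fin (ℓ+1) → Fin n, IsWalk w i j ℓ p ∧ walkWeight w ℓ p = x}

/-- `w` is `δ`-regular. -/
def IsRegular {n : ℕ} (w : Fin n → Fin n → EReal) (δ : ℕ) : Prop :=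
  ∀ i j : Fin n,
    (dist w i j ≠ ⊥ → dist w i j = distLE w δ i j) ∧
    (dist w i j = ⊥ →
      ∃ ℓ ≤ δ, ∃ p : Fin (ℓ+1) → Fin n, IsWalk w i j ℓ p ∧ walkWeight w ℓ p < 0)

/-- All entries of `w` are in `{-1, 0, 1, ⊤}`. -/
def EntriesInMinusOneZeroOneTop {n : ℕ} (w : Fin n → Fin n → EReal) : Prop :=
  ∀ i j, w i j = -1 ∨ w i j = 0 ∨ w i j = 1 ∨ w i j = ⊤

/-- `p` is a shortest walk from `i` to `j` under `w`. -/
def IsShortestWalk {n : ℕ} (w : Fin n → Fin n → EReal) (i j : Fin n) (ℓ : ℕ)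
    (p : Fin (ℓ+1) → Fin n) : Prop :=
  IsWalk w i j ℓ p ∧ walkWeight w ℓ p = dist w i j

/-- `wc` is a canonical graph of `w`. -/
def IsCanonical {n : ℕ} (w wc : Fin n → Fin n → EReal) : Prop :=
  EntriesInMinusOneZeroOneTop wc ∧
  ∀ (i j : Fin n) (ℓ : ℕ) (p : Fin (ℓ+1) → Fin n), IsShortestWalk w i j ℓ p →
    ∃ ℓ' ≤ ℓ, ∃ p' : Fin (ℓ'+1) → Fin n,
      IsShortestWalk wc i j ℓ' p' ∧
      walkWeight wc ℓ' p' = walkWeight w ℓ p ∧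
      (ℓ' = 1 ∨ ∀ k : Fin ℓ', wc (p' k.castSucc) (p' k.succ) ≠ 0)

/-- `halve x = ⌈x/2⌉` for finite `x`, and `halve (⊥) = ⊥`, `halve (⊤) = ⊤`. -/
noncomputable def halve (x : EReal) : EReal :=
  if x = ⊤ then ⊤ else if x = ⊥ then ⊥ else (((⌈x.toReal / 2⌉ : ℤ) : ℝ) : EReal)


/-! ### ℕ-indexed walks -/

def NW {n : ℕ} (w : Fin n → Fin n → EReal) (ℓ : ℕ) (f : ℕ → Fin n) : Prop :=
  ∀ k < ℓ, w (f k) (f (k+1)) ≠ ⊤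

noncomputable def nwt {n : ℕ} (w : Fin n → Fin n → EReal) (ℓ : ℕ) (f : ℕ → Fin n) : EReal :=
  ∑ k ∈ Finset.range ℓ, w (f k) (f (k+1))

lemma nw_to_walk {n : ℕ} {w : Fin n → Fin n → EReal} {ℓ : ℕ} {f : ℕ → Fin n}
    (h : NW w ℓ f) :
    IsWalk w (f 0) (f ℓ) ℓ (fun k : Fin (ℓ+1) => f k.val) ∧
      walkWeight w ℓ (fun k : Fin (ℓ+1) => f k.val) = nwt w ℓ f := by
  refine ⟨⟨rfl, rfl, fun k => ?_⟩, ?_⟩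
  · simpa using h k.val k.isLt
  · rw [walkWeight, nwt, ← Fin.sum_univ_eq_sum_range (fun k => w (f k) (f (k+1))) ℓ]
    exact Finset.sum_congr rfl fun k _ => by rw [Fin.coe_castSucc, Fin.val_succ]

lemma dist_le_nwt {n : ℕ} {w : Fin n → Fin n → EReal} {ℓ : ℕ} {f : ℕ → Fin n}
    (h : NW w ℓ f) : dist w (f 0) (f ℓ) ≤ nwt w ℓ f := by
  obtain ⟨h1, h2⟩ := nw_to_walk h
  exact sInf_le ⟨ℓ, _, h1, h2⟩

lemma walk_to_nw {n : ℕ} {w : Fin n → Fin n → EReal} {i j : Fin n} {ℓ : ℕ}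
    {p : Fin (ℓ+1) → Fin n} (h : IsWalk w i j ℓ p) :
    ∃ f : ℕ → Fin n, NW w ℓ f ∧ f 0 = i ∧ f ℓ = j ∧ nwt w ℓ f = walkWeight w ℓ p ∧
      ∀ (k : ℕ) (hk : k ≤ ℓ), f k = p ⟨k, by omega⟩ := by
  obtain ⟨h0, hl, he⟩ := h
  refine ⟨fun k => p ⟨min k ℓ, by omega⟩, ?_, ?_, ?_, ?_, ?_⟩
  · intro k hk
    have e1 : (⟨k, hk⟩ : Fin ℓ).castSucc = (⟨min k ℓ, by omega⟩ : Fin (ℓ+1)) :=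
      Fin.ext (by simp only [Fin.coe_castSucc]; omega)
    have e2 : (⟨k, hk⟩ : Fin ℓ).succ = (⟨min (k+1) ℓ, by omega⟩ : Fin (ℓ+1)) :=
      Fin.ext (by simp only [Fin.val_succ]; omega)
    have := he ⟨k, hk⟩
    rw [e1, e2] at this
    exact this
  · have : (⟨min 0 ℓ, by omega⟩ : Fin (ℓ+1)) = 0 := by simp only [Fin.ext_iff]; simp
    simp only [this]; exact h0
  · have : (⟨min ℓ ℓ, by omega⟩ : Fin (ℓ+1)) = Fin.last ℓ := by
      simp only [Fin.ext_iff, Fin.val_last]; omega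
    simp only [this]; exact hl
  · rw [walkWeight, nwt, ← Fin.sum_univ_eq_sum_range
      (fun k => w (p ⟨min k ℓ, by omega⟩) (p ⟨min (k+1) ℓ, by omega⟩)) ℓ]
    refine Finset.sum_congr rfl fun k _ => ?_
    have e1 : k.castSucc = (⟨min (k : ℕ) ℓ, by omega⟩ : Fin (ℓ+1)) :=
      Fin.ext (by simp only [Fin.coe_castSucc]; omega)
    have e2 : k.succ = (⟨min ((k : ℕ)+1) ℓ, by omega⟩ : Fin (ℓ+1)) :=
      Fin.ext (by simp only [Fin.val_succ]; omega)
    rw [e1, e2]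
  · intro k hk
    have : (⟨min k ℓ, by omega⟩ : Fin (ℓ+1)) = ⟨k, by omega⟩ := by
      simp only [Fin.ext_iff]; omega
    simp only [this]

/-! ### concatenation and shifts -/

def cat (a : ℕ) (f g : ℕ → Fin n) : ℕ → Fin n := fun k => if k ≤ a then f k else g (k - a)

lemma cat_left {a : ℕ} {f g : ℕ → Fin n} {k : ℕ} (hk : k ≤ a) : cat a f g k = f k := by
  simp [cat, hk]

lemma cat_right {a : ℕ} {f g : ℕ → Fin n} (hfg : f a = g 0) (k : ℕ) :
    cat a f g (a + k) = g k := by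
  rcases Nat.eq_zero_or_pos k with rfl | hk
  · simpa [cat] using hfg
  · simp only [cat]; rw [if_neg (by omega)]; congr 1; omega

lemma nw_cat {n : ℕ} {w : Fin n → Fin n → EReal} {a b : ℕ} {f g : ℕ → Fin n}
    (hf : NW w a f) (hg : NW w b g) (hfg : f a = g 0) :
    NW w (a + b) (cat a f g) ∧ nwt w (a + b) (cat a f g) = nwt w a f + nwt w b g := by
  constructor
  · intro k hk
    rcases lt_or_ge k a with h | h
    · rw [cat_left (by omega), cat_left (by omega)]; exact hf k h
    · obtain ⟨m, rfl⟩ := Nat.exists_eq_add_of_le h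
      rw [cat_right hfg, show a + m + 1 = a + (m + 1) by ring, cat_right hfg]
      exact hg m (by omega)
  · rw [nwt, Finset.sum_range_add]
    congr 1
    · exact Finset.sum_congr rfl fun k hk => by
        simp only [Finset.mem_range] at hk
        rw [cat_left (by omega), cat_left (by omega)]
    · exact Finset.sum_congr rfl fun k hk => by
        rw [cat_right hfg, show a + k + 1 = a + (k + 1) by ring, cat_right hfg]

lemma nw_split {n : ℕ} {w : Fin n → Fin n → EReal} {ℓ : ℕ} {f : ℕ → Fin n}
    (h : NW w ℓ f) {a : ℕ} (ha : a ≤ ℓ) :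
    NW w a f ∧ NW w (ℓ - a) (fun k => f (a + k)) ∧
      nwt w ℓ f = nwt w a f + nwt w (ℓ - a) (fun k => f (a + k)) := by
  refine ⟨fun k hk => h k (by omega), fun k hk => by
    show w (f (a + k)) (f (a + k + 1)) ≠ ⊤; exact h (a + k) (by omega), ?_⟩
  have key : nwt w (a + (ℓ - a)) f = nwt w a f + nwt w (ℓ - a) (fun k => f (a + k)) := by
    rw [nwt, Finset.sum_range_add]; rfl
  rw [← key, Nat.add_sub_cancel' ha]

/-! ### integrality of weights -/

lemma nwt_int {n : ℕ} {w : Fin n → Fin n → EReal} (hw : EntriesInMinusOneZeroOneTop w)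
    {ℓ : ℕ} {f : ℕ → Fin n} (h : NW w ℓ f) :
    ∃ m : ℤ, nwt w ℓ f = ((m : ℝ) : EReal) := by
  induction ℓ with
  | zero => exact ⟨0, by simp [nwt]⟩
  | succ ℓ ih =>
    obtain ⟨m, hm⟩ := ih (fun k hk => h k (by omega))
    have hedge := h ℓ (by omega)
    rcases hw (f ℓ) (f (ℓ+1)) with he | he | he | he
    · refine ⟨m - 1, ?_⟩
      rw [nwt, Finset.sum_range_succ, ← nwt, hm, he,
        show (-1 : EReal) = ((-1 : ℝ) : EReal) by rw [EReal.coe_neg, EReal.coe_one],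
        ← EReal.coe_add]
      exact congrArg _ (by push_cast; ring)
    · exact ⟨m, by rw [nwt, Finset.sum_range_succ, ← nwt, hm, he]; simp⟩
    · refine ⟨m + 1, ?_⟩
      rw [nwt, Finset.sum_range_succ, ← nwt, hm, he, ← EReal.coe_one, ← EReal.coe_add]
      exact congrArg _ (by push_cast; ring)
    · exact absurd he hedge

/-! ### repeating a loop -/

lemma nw_pow {n : ℕ} {w : Fin n → Fin n → EReal} {c : ℕ} {g : ℕ → Fin n}
    (hg : NW w c g) (hcyc : g c = g 0) {z : ℤ} (hz : nwt w c g = ((z : ℝ) : EReal)) :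
    ∀ m : ℕ, ∃ h : ℕ → Fin n, NW w (m * c) h ∧ h 0 = g 0 ∧ h (m * c) = g 0 ∧
      nwt w (m * c) h = (((m * z : ℤ) : ℝ) : EReal) := by
  intro m
  induction m with
  | zero => exact ⟨fun _ => g 0, fun k hk => by omega, rfl, rfl, by simp [nwt]⟩
  | succ m ih =>
    obtain ⟨h, hh, h0, hend, hwt⟩ := ih
    have hfg : g c = h 0 := by rw [hcyc, h0]
    obtain ⟨hcat, hcatwt⟩ := nw_cat hg hh hfg
    refine ⟨cat c g h, by rwa [show (m+1)*c = c + m*c by ring], ?_, ?_, ?_⟩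
    · rw [cat_left (Nat.zero_le c)]
    · rw [show (m+1)*c = c + m*c by ring, cat_right hfg, hend]
    · rw [show (m+1)*c = c + m*c by ring, hcatwt, hz, hwt, ← EReal.coe_add]
      exact congrArg _ (by push_cast; ring)

/-- if the distance is finite, there is a shortest walk with at most `n²` hops. -/
theorem stmt1 (n : ℕ) (hn : 1 ≤ n) (w : Fin n → Fin n → EReal)
    (hw : EntriesInMinusOneZeroOneTop w) (i j : Fin n)
    (hfin : dist w i j ≠ ⊤ ∧ dist w i j ≠ ⊥) :
    ∃ ℓ ≤ n^2, ∃ p : Fin (ℓ+1) → Fin n, IsWalk w i j ℓ p ∧ walkWeight w ℓ p = dist w i j := by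
  classical
  obtain ⟨hT, hB⟩ := hfin
  have ceAdd : ∀ x y : ℤ, ((x : ℝ) : EReal) + ((y : ℝ) : EReal) = (((x + y : ℤ) : ℝ) : EReal) :=
    fun x y => by rw [← EReal.coe_add]; exact congrArg _ (by push_cast; ring)
  set S := {x : EReal | ∃ ℓ, ∃ p : Fin (ℓ+1) → Fin n, IsWalk w i j ℓ p ∧ walkWeight w ℓ p = x}
    with hS
  have hdS : dist w i j = sInf S := rfl
  have hSne : S.Nonempty := by
    by_contra h
    rw [Set.not_nonempty_iff_eq_empty] at h
    exact hT (by rw [hdS, h, sInf_empty])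
  set d : ℝ := (dist w i j).toReal with hdd
  have hdc : ((d : ℝ) : EReal) = dist w i j := EReal.coe_toReal hT hB
  set P : ℤ → Prop := fun m => ∃ ℓ, ∃ p : Fin (ℓ+1) → Fin n,
    IsWalk w i j ℓ p ∧ walkWeight w ℓ p = ((m : ℝ) : EReal) with hP
  have hmem : ∀ x ∈ S, ∃ m : ℤ, x = ((m : ℝ) : EReal) ∧ P m := by
    rintro x ⟨ℓ, p, hwalk, hwt⟩
    obtain ⟨f, hf, _, _, hfwt, _⟩ := walk_to_nw hwalk
    obtain ⟨m, hm⟩ := nwt_int hw hf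
    exact ⟨m, by rw [← hwt, ← hfwt, hm], ⟨ℓ, p, hwalk, by rw [← hfwt, hm]⟩⟩
  have hPw : ∀ m : ℤ, P m → dist w i j ≤ ((m : ℝ) : EReal) := by
    rintro m ⟨ℓ, p, hwalk, hwt⟩
    rw [hdS]; exact sInf_le ⟨ℓ, p, hwalk, hwt⟩
  have hbdd : ∀ m : ℤ, P m → ⌈d⌉ ≤ m := by
    intro m hm
    have := hPw m hm
    rw [← hdc, EReal.coe_le_coe_iff] at this
    exact Int.ceil_le.mpr this
  have hPne : ∃ m : ℤ, P m := by
    obtain ⟨x, hx⟩ := hSne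
    obtain ⟨m, _, hm⟩ := hmem x hx
    exact ⟨m, hm⟩
  obtain ⟨m0, hm0P, hm0min⟩ := Int.exists_least_of_bdd ⟨⌈d⌉, hbdd⟩ hPne
  have hdist : dist w i j = ((m0 : ℝ) : EReal) := by
    refine le_antisymm (hPw m0 hm0P) ?_
    rw [hdS]
    refine le_sInf fun x hx => ?_
    obtain ⟨m, hxm, hm⟩ := hmem x hx
    rw [hxm, EReal.coe_le_coe_iff]
    exact_mod_cast hm0min m hm
  have hL : ∃ ℓ, ∃ p : Fin (ℓ+1) → Fin n, IsWalk w i j ℓ p ∧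
      walkWeight w ℓ p = ((m0 : ℝ) : EReal) := hm0P
  set ℓ0 := Nat.find hL with hℓ0
  obtain ⟨p0, hwalk0, hwt0⟩ := Nat.find_spec hL
  have hmin : ∀ ℓ' (p' : Fin (ℓ'+1) → Fin n), IsWalk w i j ℓ' p' →
      walkWeight w ℓ' p' = ((m0 : ℝ) : EReal) → ℓ0 ≤ ℓ' :=
    fun ℓ' p' h1 h2 => Nat.find_min' hL ⟨p', h1, h2⟩
  have hl0 : ℓ0 ≤ n ^ 2 := by
    by_contra hcon
    push_neg at hcon
    have hn2 : n ≤ n ^ 2 := by nlinarith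
    have hcard : Fintype.card (Fin n) < Fintype.card (Fin (ℓ0+1)) := by
      simp only [Fintype.card_fin]; omega
    obtain ⟨a, b, hne, hpab⟩ := Fintype.exists_ne_map_eq_of_card_lt p0 hcard
    obtain ⟨f, hf, hf0, hfl, hfwt, hfk⟩ := walk_to_nw hwalk0
    have key : ∀ A B : ℕ, A < B → B ≤ ℓ0 → f A = f B → False := by
      intro A B hAB hBl hfAB
      -- split the walk
      obtain ⟨hpre, hsufB, hsplitB⟩ := nw_split hf hBl
      obtain ⟨hpreA, hmid, hsplitA⟩ := nw_split hpre (le_of_lt hAB)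
      obtain ⟨m1, hm1⟩ := nwt_int hw hpreA
      obtain ⟨c, hc⟩ := nwt_int hw hmid
      obtain ⟨m2, hm2⟩ := nwt_int hw hsufB
      have hsum : ((m0 : ℝ) : EReal) = (((m1 + c + m2 : ℤ) : ℝ) : EReal) := by
        rw [← hwt0, ← hfwt, hsplitB, hsplitA, hm1, hc, hm2, ceAdd, ceAdd]
      have hsum' : m0 = m1 + c + m2 := by
        rw [EReal.coe_eq_coe_iff] at hsum; exact_mod_cast hsum
      -- the spliced walk
      have hmideq : (fun k => f (A + k)) (B - A) = f B := by
        show f (A + (B - A)) = f B; congr 1; omega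
      have hfAsB : f A = (fun k => f (B + k)) 0 := by
        show f A = f (B + 0); rw [hfAB]; rfl
      obtain ⟨hq, hqwt⟩ := nw_cat hpreA hsufB hfAsB
      have hq0 : cat A f (fun k => f (B + k)) 0 = i := by rw [cat_left (Nat.zero_le A), hf0]
      have hqend : cat A f (fun k => f (B + k)) (A + (ℓ0 - B)) = j := by
        rw [cat_right hfAsB]
        show f (B + (ℓ0 - B)) = j
        rw [show B + (ℓ0 - B) = ℓ0 by omega, hfl]
      obtain ⟨hqwalk, hqwwt⟩ := nw_to_walk hq
      rw [hq0, hqend] at hqwalk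
      have hqint : walkWeight w (A + (ℓ0 - B)) (fun k => (cat A f (fun k => f (B + k))) k.val)
          = (((m1 + m2 : ℤ) : ℝ) : EReal) := by
        rw [hqwwt, hqwt, hm1, hm2, ceAdd]
      rcases lt_trichotomy c 0 with hcneg | hczero | hcpos
      · -- negative cycle: pump it
        have hcyc : (fun k => f (A + k)) (B - A) = (fun k => f (A + k)) 0 := by
          rw [hmideq]; show f B = f (A + 0); rw [← hfAB]; rfl
        have hpump : ∀ m : ℕ, dist w i j ≤ (((m1 + m * c + m2 : ℤ) : ℝ) : EReal) := by
          intro m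
          obtain ⟨h, hh, hh0, hhend, hhwt⟩ := nw_pow hmid hcyc hc m
          have hfh : f A = h 0 := hh0.symm
          obtain ⟨hq2, hq2wt⟩ := nw_cat hpreA hh hfh
          have hq2end : cat A f h (A + m * (B - A)) = f B := by
            rw [cat_right hfh, hhend]; exact hfAB
          have hq3con : cat A f h (A + m * (B - A)) = (fun k => f (B + k)) 0 := by
            rw [hq2end]; rfl
          obtain ⟨hq3, hq3wt⟩ := nw_cat hq2 hsufB hq3con
          have hq30 : cat (A + m * (B - A)) (cat A f h) (fun k => f (B + k)) 0 = i := by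
            rw [cat_left (Nat.zero_le _), cat_left (Nat.zero_le _), hf0]
          have hq3end : cat (A + m * (B - A)) (cat A f h) (fun k => f (B + k))
              (A + m * (B - A) + (ℓ0 - B)) = j := by
            rw [cat_right hq3con]
            show f (B + (ℓ0 - B)) = j
            rw [show B + (ℓ0 - B) = ℓ0 by omega, hfl]
          obtain ⟨hq3walk, hq3wwt⟩ := nw_to_walk hq3
          rw [hq30, hq3end] at hq3walk
          have : dist w i j ≤ nwt w (A + m * (B - A) + (ℓ0 - B))
              (cat (A + m * (B - A)) (cat A f h) (fun k => f (B + k))) := by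
            rw [hdS]
            exact sInf_le ⟨_, _, hq3walk, hq3wwt⟩
          calc dist w i j ≤ _ := this
            _ = (((m1 + m * c + m2 : ℤ) : ℝ) : EReal) := by
                rw [hq3wt, hq2wt, hm1, hhwt, hm2, ceAdd, ceAdd]
        set m : ℕ := (m1 + m2 - m0 + 1).toNat with hm
        have h1 := hpump m
        rw [hdist, EReal.coe_le_coe_iff] at h1
        have h2 : (m0 : ℝ) ≤ ((m1 + m * c + m2 : ℤ) : ℝ) := h1
        have h3 : m0 ≤ m1 + (m : ℤ) * c + m2 := by exact_mod_cast h2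
        have h4 : (m : ℤ) * c ≤ (m : ℤ) * (-1) := by
          apply mul_le_mul_of_nonneg_left (by omega) (by positivity)
        have h5 : (m : ℤ) = max (m1 + m2 - m0 + 1) 0 := by
          rw [hm]; exact_mod_cast Int.toNat_eq_max _
        omega
      · -- zero cycle: shorter shortest walk
        have : ℓ0 ≤ A + (ℓ0 - B) := by
          apply hmin _ _ hqwalk
          rw [hqint]
          congr 2
          omega
        omega
      · -- positive cycle: splicing beats the distance
        have hle : dist w i j ≤ (((m1 + m2 : ℤ) : ℝ) : EReal) := by
          rw [hdS]; exact sInf_le ⟨_, _, hqwalk, hqint⟩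
        rw [hdist, EReal.coe_le_coe_iff] at hle
        have : m0 ≤ m1 + m2 := by exact_mod_cast hle
        omega
    rcases Ne.lt_or_gt hne with hab | hab
    · refine key a.val b.val hab (by omega) ?_
      rw [hfk a.val (by omega), hfk b.val (by omega)]
      simpa [Fin.eta] using hpab
    · refine key b.val a.val hab (by omega) ?_
      rw [hfk a.val (by omega), hfk b.val (by omega)]
      simpa [Fin.eta] using hpab.symm
  exact ⟨ℓ0, hl0, p0, hwalk0, by rw [hwt0, hdist]⟩

end MinMaxAPSP
end

section
/- Let n ≥ 1, let w : Fin n → Fin n → EReal have all entries in {−1, 0, 1, ⊤}, and let w_c be a canonical graph of w with d_{w_c}(p,q) = d_w(p,q) for all p,q; write d = d_{w_c} and t*(p,q) = halve(d(p,q)). Fix i, j with d(i,j) finite (an integer). Then min over k ∈ Fin n of max(t*(i,k), x⁺(k,j)) equals t*(i,j) − 1 if and only if d(i,j) is odd and there exists a shortest walk from i to j under w_c whose last edge has weight 1. -/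
open scoped BigOperators

namespace MinMaxAPSP

section AuxLemmas

lemma ereal_coe_sum {α : Type*} (s : Finset α) (g : α → ℝ) :
    ((∑ a ∈ s, g a : ℝ) : EReal) = ∑ a ∈ s, ((g a : ℝ) : EReal) := by
  induction s using Finset.cons_induction with
  | empty => simp
  | cons a s h ih => simp [Finset.sum_cons, ← ih]

lemma walkWeight_int {n : ℕ} {wc : Fin n → Fin n → EReal}
    (hw : EntriesInMinusOneZeroOneTop wc) {i j : Fin n} {ℓ : ℕ} {p : Fin (ℓ+1) → Fin n}
    (hp : IsWalk wc i j ℓ p) : ∃ z : ℤ, walkWeight wc ℓ p = ((z : ℝ) : EReal) := by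
  have h : ∀ k : Fin ℓ, ∃ z : ℤ, wc (p k.castSucc) (p k.succ) = ((z : ℝ) : EReal) := by
    intro k
    rcases hw (p k.castSucc) (p k.succ) with h1 | h1 | h1 | h1
    · exact ⟨-1, by rw [h1]; norm_num⟩
    · exact ⟨0, by rw [h1]; norm_num⟩
    · exact ⟨1, by rw [h1]; norm_num⟩
    · exact absurd h1 (hp.2.2 k)
  choose f hf using h
  refine ⟨∑ k, f k, ?_⟩
  rw [walkWeight]
  push_cast
  rw [ereal_coe_sum]
  exact Finset.sum_congr rfl fun k _ => hf k

lemma dist_le_walkWeight' {n : ℕ} (wc : Fin n → Fin n → EReal) {i j : Fin n} {ℓ : ℕ}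
    {p : Fin (ℓ+1) → Fin n} (hp : IsWalk wc i j ℓ p) : dist wc i j ≤ walkWeight wc ℓ p :=
  sInf_le ⟨ℓ, p, hp, rfl⟩

/-- Extend a walk i→k by an edge k→j. -/
lemma extend_walk {n : ℕ} (wc : Fin n → Fin n → EReal) {i k j : Fin n} {ℓ : ℕ}
    {p : Fin (ℓ+1) → Fin n} (hp : IsWalk wc i k ℓ p) (he : wc k j ≠ ⊤) :
    IsWalk wc i j (ℓ+1) (Fin.snoc p j) ∧
      walkWeight wc (ℓ+1) (Fin.snoc p j) = walkWeight wc ℓ p + wc k j := by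
  obtain ⟨h0, hl, hedge⟩ := hp
  have hcast : ∀ m : Fin (ℓ+1), (Fin.snoc p j : Fin (ℓ+2) → Fin n) m.castSucc = p m :=
    fun m => by simp
  constructor
  · refine ⟨?_, ?_, ?_⟩
    · have : (0 : Fin (ℓ+2)) = (0 : Fin (ℓ+1)).castSucc := by simp
      rw [this, hcast, h0]
    · simp [Fin.snoc_last]
    · intro m
      induction m using Fin.lastCases with
      | last =>
        rw [hcast, Fin.succ_last, Fin.snoc_last, hl]
        exact he
      | cast q =>
        rw [hcast, Fin.succ_castSucc, hcast]
        exact hedge q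
  · rw [walkWeight, Fin.sum_univ_castSucc]
    congr 1
    · apply Finset.sum_congr rfl
      intro q _
      rw [hcast, Fin.succ_castSucc, hcast]
    · rw [hcast, Fin.succ_last, Fin.snoc_last, hl]

/-- Prefix of a walk of ℓ+1 hops. -/
lemma prefix_walk {n : ℕ} (wc : Fin n → Fin n → EReal) {i j : Fin n} {ℓ : ℕ}
    {p : Fin (ℓ+2) → Fin n} (hp : IsWalk wc i j (ℓ+1) p) :
    IsWalk wc i (p (Fin.last ℓ).castSucc) ℓ (fun m => p m.castSucc) ∧
      walkWeight wc (ℓ+1) p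
        = walkWeight wc ℓ (fun m => p m.castSucc) + wc (p (Fin.last ℓ).castSucc) j := by
  obtain ⟨h0, hl, hedge⟩ := hp
  constructor
  · refine ⟨?_, rfl, ?_⟩
    · simpa using h0
    · intro q
      have := hedge q.castSucc
      rwa [Fin.succ_castSucc] at this
  · rw [walkWeight, walkWeight, Fin.sum_univ_castSucc]
    simp only [Fin.succ_castSucc, Fin.succ_last, hl]

/-- Attainment of finite distance. -/
lemma dist_attained {n : ℕ} {wc : Fin n → Fin n → EReal}
    (hw : EntriesInMinusOneZeroOneTop wc) {i j : Fin n}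
    (ht : dist wc i j ≠ ⊤) (hb : dist wc i j ≠ ⊥) :
    ∃ z : ℤ, dist wc i j = ((z : ℝ) : EReal) ∧
      ∃ ℓ, ∃ p : Fin (ℓ+1) → Fin n, IsShortestWalk wc i j ℓ p := by
  set S := {x : EReal | ∃ ℓ, ∃ p : Fin (ℓ+1) → Fin n, IsWalk wc i j ℓ p ∧ walkWeight wc ℓ p = x}
    with hS
  have hd : dist wc i j = sInf S := rfl
  set r : ℝ := (dist wc i j).toReal with hr
  have hdr : dist wc i j = (r : EReal) := (EReal.coe_toReal ht hb).symm
  have h1 : sInf S < ((r + 1/2 : ℝ) : EReal) := by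
    rw [← hd, hdr]
    exact_mod_cast (by linarith : r < r + 1/2)
  obtain ⟨a, haS, halt⟩ := sInf_lt_iff.mp h1
  have haS2 := haS
  obtain ⟨ℓ, p, hpw, hpa⟩ := haS2
  obtain ⟨z, hz⟩ := walkWeight_int hw hpw
  have hza : a = ((z : ℝ) : EReal) := by rw [← hpa, hz]
  have hrz : (r : EReal) ≤ ((z:ℝ) : EReal) := by
    rw [← hdr, hd]; rw [hza] at haS; exact sInf_le haS
  have hrz' : r ≤ (z : ℝ) := by exact_mod_cast hrz
  have hzr : (z : ℝ) = r := by
    by_contra hne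
    have hlt : r < (z : ℝ) := lt_of_le_of_ne hrz' (Ne.symm hne)
    have : sInf S < ((z:ℝ) : EReal) := by
      rw [← hd, hdr]; exact_mod_cast hlt
    obtain ⟨a', ha'S, ha'lt⟩ := sInf_lt_iff.mp this
    obtain ⟨ℓ', p', hpw', hpa'⟩ := ha'S
    obtain ⟨z', hz'⟩ := walkWeight_int hw hpw'
    have hz'z : (z' : ℝ) < (z : ℝ) := by
      rw [← hpa', hz'] at ha'lt; exact_mod_cast ha'lt
    have hz'zint : z' < z := by exact_mod_cast hz'z
    have hz'z' : (z' : ℤ) ≤ z - 1 := by omega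
    have hrz2 : (r : EReal) ≤ ((z':ℝ) : EReal) := by
      rw [← hdr, hd]
      exact sInf_le (by rw [← hz', hpa']; exact ⟨ℓ', p', hpw', hpa'⟩)
    have h6 : r ≤ (z' : ℝ) := by exact_mod_cast hrz2
    have hrec : a < ((r + 1/2 : ℝ) : EReal) := halt
    have h7 : (z : ℝ) < r + 1/2 := by rw [hza] at hrec; exact_mod_cast hrec
    have h8 : (z' : ℝ) ≤ (z : ℝ) - 1 := by exact_mod_cast hz'z'
    linarith
  refine ⟨z, by rw [hdr, hzr], ℓ, p, hpw, ?_⟩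
  rw [hz, hzr, ← hdr]

/-- Triangle inequality via a final weight-1 edge. -/
lemma triangle {n : ℕ} {wc : Fin n → Fin n → EReal}
    (hw : EntriesInMinusOneZeroOneTop wc) {i k j : Fin n}
    (h1 : wc k j = 1) (hb : dist wc i j ≠ ⊥) :
    dist wc i j ≤ dist wc i k + 1 := by
  have hne : wc k j ≠ ⊤ := by rw [h1, ← EReal.coe_one]; exact EReal.coe_ne_top _
  rcases eq_or_ne (dist wc i k) ⊤ with htop | htop
  · rw [htop]
    rw [EReal.top_add_of_ne_bot (by rw [← EReal.coe_one]; exact EReal.coe_ne_bot _)]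
    exact le_top
  rcases eq_or_ne (dist wc i k) ⊥ with hbot | hbot
  · exfalso
    apply hb
    have hSbot : dist wc i k = ⊥ := hbot
    rw [dist] at hSbot
    rw [dist, sInf_eq_bot]
    intro b hb'
    induction b using EReal.rec with
    | bot => exact absurd hb' (lt_irrefl _)
    | coe t =>
      obtain ⟨a, haS, halt⟩ := (sInf_eq_bot.mp hSbot) ((t - 1 : ℝ) : EReal)
        (by exact_mod_cast (bot_lt_iff_ne_bot.mpr (EReal.coe_ne_bot _)))
      obtain ⟨ℓ, p, hpw, hpa⟩ := haS
      obtain ⟨y, hy⟩ := walkWeight_int hw hpw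
      obtain ⟨hq, hqw⟩ := extend_walk wc hpw hne
      refine ⟨walkWeight wc (ℓ+1) (Fin.snoc p j), ⟨ℓ+1, _, hq, rfl⟩, ?_⟩
      rw [hqw, hy, h1]
      have hyt : (y : ℝ) < t - 1 := by
        rw [← hpa, hy] at halt; exact_mod_cast halt
      have hstep : ((y : ℝ) : EReal) + 1 = (((y : ℝ) + 1 : ℝ) : EReal) := by norm_cast
      rw [hstep]
      exact_mod_cast (by linarith : (y:ℝ) + 1 < t)
    | top =>
      obtain ⟨a, haS, halt⟩ := (sInf_eq_bot.mp hSbot) ((0 : ℝ) : EReal)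
        (by exact_mod_cast (bot_lt_iff_ne_bot.mpr (EReal.coe_ne_bot _)))
      obtain ⟨ℓ, p, hpw, hpa⟩ := haS
      obtain ⟨y, hy⟩ := walkWeight_int hw hpw
      obtain ⟨hq, hqw⟩ := extend_walk wc hpw hne
      refine ⟨walkWeight wc (ℓ+1) (Fin.snoc p j), ⟨ℓ+1, _, hq, rfl⟩, ?_⟩
      rw [hqw, hy, h1]
      have hstep : ((y : ℝ) : EReal) + 1 = (((y : ℝ) + 1 : ℝ) : EReal) := by norm_cast
      rw [hstep]
      exact lt_top_iff_ne_top.mpr (EReal.coe_ne_top _)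
  · obtain ⟨y, hy, ℓ, p, hsw⟩ := dist_attained hw htop hbot
    obtain ⟨hq, hqw⟩ := extend_walk wc hsw.1 hne
    have := dist_le_walkWeight' wc hq
    rw [hqw, hsw.2, h1] at this
    exact this

lemma ceil2_le (z m : ℤ) : ⌈(z:ℝ)/2⌉ ≤ m ↔ z ≤ 2*m := by
  rw [Int.ceil_le, div_le_iff₀ (by norm_num : (0:ℝ) < 2)]
  constructor
  · intro h
    exact_mod_cast (by push_cast at h ⊢; linarith : (z:ℝ) ≤ ((2*m:ℤ):ℝ))
  · intro h
    have : (z:ℝ) ≤ ((2*m:ℤ):ℝ) := by exact_mod_cast h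
    push_cast at this ⊢; linarith

lemma le_ceil2 (z m : ℤ) : m ≤ ⌈(z:ℝ)/2⌉ ↔ 2*m - 1 ≤ z := by
  constructor
  · intro h
    by_contra hc
    push_neg at hc
    have := (ceil2_le z (m-1)).mpr (by omega)
    omega
  · intro h
    by_contra hc
    push_neg at hc
    have := (ceil2_le z (m-1)).mp (by omega)
    omega

lemma halve_coe (z : ℤ) : halve ((z:ℝ):EReal) = ((⌈(z:ℝ)/2⌉ : ℤ) : ℝ) := by
  rw [halve, if_neg (EReal.coe_ne_top _), if_neg (EReal.coe_ne_bot _), EReal.toReal_coe]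

lemma halve_top : halve ⊤ = ⊤ := by simp [halve]
lemma halve_bot : halve ⊥ = ⊥ := by simp [halve]

end AuxLemmas

/-- characterization of `z⁺ᵢⱼ = 1`. -/
theorem stmt4 (n : ℕ) (hn : 1 ≤ n) (w wc : Fin n → Fin n → EReal)
    (hw : EntriesInMinusOneZeroOneTop w)
    (hc : IsCanonical w wc) (hdc : ∀ p q : Fin n, dist wc p q = dist w p q)
    (i j : Fin n) (hfin : dist wc i j ≠ ⊤ ∧ dist wc i j ≠ ⊥) :
    (⨅ k : Fin n, max (halve (dist wc i k)) (if wc k j = 1 then (⊥ : EReal) else ⊤))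
        = halve (dist wc i j) - 1 ↔
      ((∃ m : ℤ, dist wc i j = (((2*m+1 : ℤ) : ℝ) : EReal)) ∧
        ∃ ℓ, ∃ p : Fin (ℓ+2) → Fin n, IsShortestWalk wc i j (ℓ+1) p ∧
          wc (p (Fin.last ℓ).castSucc) (p (Fin.last (ℓ+1))) = 1) := by
  obtain ⟨ht, hb⟩ := hfin
  have hwc : EntriesInMinusOneZeroOneTop wc := hc.1
  have hne : Nonempty (Fin n) := ⟨⟨0, hn⟩⟩
  obtain ⟨z, hz, -⟩ := dist_attained hwc ht hb
  set c := ⌈(z:ℝ)/2⌉ with hcdef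
  have hzc1 : 2*c - 1 ≤ z := (le_ceil2 z c).mp le_rfl
  have hzc2 : z ≤ 2*c := (ceil2_le z c).mp le_rfl
  have hhd : halve (dist wc i j) = ((c:ℝ) : EReal) := by rw [hz, halve_coe]
  have hsub : halve (dist wc i j) - 1 = (((c - 1 : ℤ) : ℝ) : EReal) := by
    rw [hhd, ← EReal.coe_one, ← EReal.coe_sub]
    norm_cast
  have haux : ∀ k : Fin n, wc k j = 1 →
      dist wc i k = ⊤ ∨ ∃ y : ℤ, dist wc i k = ((y : ℝ) : EReal) ∧ z ≤ y + 1 := by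
    intro k hk
    rcases eq_or_ne (dist wc i k) ⊤ with h' | h'
    · exact Or.inl h'
    have hkb : dist wc i k ≠ ⊥ := by
      intro hh
      have htri := triangle hwc hk hb
      rw [hh, EReal.bot_add] at htri
      exact hb (le_bot_iff.mp htri)
    obtain ⟨y, hy, -⟩ := dist_attained hwc h' hkb
    refine Or.inr ⟨y, hy, ?_⟩
    have htri := triangle hwc hk hb
    rw [hz, hy] at htri
    have hco : ((y:ℝ):EReal) + 1 = (((y:ℝ) + 1 : ℝ) : EReal) := by norm_cast
    rw [hco] at htri
    have : (z:ℝ) ≤ (y:ℝ) + 1 := by exact_mod_cast htri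
    exact_mod_cast this
  constructor
  · intro h
    obtain ⟨k, hk⟩ := exists_eq_ciInf_of_finite
      (f := fun k => max (halve (dist wc i k)) (if wc k j = 1 then (⊥:EReal) else ⊤))
    rw [h, hsub] at hk
    by_cases h1 : wc k j = 1
    swap
    · rw [if_neg h1, max_eq_right le_top] at hk
      exact absurd hk.symm (EReal.coe_ne_top _)
    rw [if_pos h1, max_eq_left bot_le] at hk
    rcases haux k h1 with htop' | ⟨y, hy, hzy⟩
    · rw [htop', halve_top] at hk
      exact absurd hk.symm (EReal.coe_ne_top _)
    rw [hy, halve_coe] at hk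
    have hcy : ⌈(y:ℝ)/2⌉ = c - 1 := by exact_mod_cast hk
    have hy2 : y ≤ 2*(c-1) := (ceil2_le y (c-1)).mp (le_of_eq hcy)
    have hz2 : z = 2*c - 1 := by omega
    have hy3 : y = z - 1 := by omega
    refine ⟨⟨c - 1, ?_⟩, ?_⟩
    · rw [hz]
      norm_cast
      omega
    obtain ⟨y', hy', ℓ₁, q, hq⟩ := dist_attained hwc
      (by rw [hy]; exact EReal.coe_ne_top _) (by rw [hy]; exact EReal.coe_ne_bot _)
    obtain ⟨hq', hq'w⟩ := extend_walk wc hq.1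
      (by rw [h1, ← EReal.coe_one]; exact EReal.coe_ne_top _)
    refine ⟨ℓ₁, Fin.snoc q j, ⟨hq', ?_⟩, ?_⟩
    · rw [hq'w, hq.2, hy, h1, hz, ← EReal.coe_one, ← EReal.coe_add]
      norm_cast
      omega
    · have hkl : q (Fin.last ℓ₁) = k := hq.1.2.1
      simp [Fin.snoc_castSucc, Fin.snoc_last, hkl, h1]
  · rintro ⟨⟨m, hm⟩, ℓ₁, p₁, hsp, hlast⟩
    have hzm : z = 2*m + 1 := by
      have hcast : ((z:ℝ):EReal) = (((2*m+1:ℤ):ℝ):EReal) := by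
        rw [← hz, hm]
      exact_mod_cast hcast
    have hcm : c = m + 1 := by omega
    set k := p₁ (Fin.last ℓ₁).castSucc with hkdef
    have hj : p₁ (Fin.last (ℓ₁+1)) = j := hsp.1.2.1
    have h1 : wc k j = 1 := by rw [← hj]; exact hlast
    obtain ⟨hpre, hprew⟩ := prefix_walk wc hsp.1
    obtain ⟨y', hy'⟩ := walkWeight_int hwc hpre
    have hw1 : walkWeight wc (ℓ₁+1) p₁ = dist wc i j := hsp.2
    have heq : ((y':ℝ):EReal) + 1 = ((z:ℝ):EReal) := by
      rw [← hy', ← h1, ← hprew, hw1, hz]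
    have hy'z : y' = z - 1 := by
      rw [← EReal.coe_one, ← EReal.coe_add] at heq
      have : (y':ℝ) + 1 = (z:ℝ) := by exact_mod_cast heq
      have : (y':ℤ) + 1 = z := by exact_mod_cast this
      omega
    have hdik_le : dist wc i k ≤ ((y':ℝ):EReal) := by
      rw [← hy']; exact dist_le_walkWeight' wc hpre
    rcases haux k h1 with htop' | ⟨y, hy, hzy⟩
    · rw [htop'] at hdik_le
      exact absurd (top_le_iff.mp hdik_le) (EReal.coe_ne_top _)
    have hyy' : y ≤ y' := by
      rw [hy] at hdik_le
      have : (y:ℝ) ≤ (y':ℝ) := by exact_mod_cast hdik_le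
      exact_mod_cast this
    have hy2m : y = 2*m := by omega
    rw [hsub]
    apply le_antisymm
    · have hfk : max (halve (dist wc i k)) (if wc k j = 1 then (⊥:EReal) else ⊤)
          = (((c-1:ℤ):ℝ):EReal) := by
        rw [if_pos h1, max_eq_left bot_le, hy, halve_coe]
        have hcy : ⌈(y:ℝ)/2⌉ = m :=
          le_antisymm ((ceil2_le y m).mpr (by omega)) ((le_ceil2 y m).mpr (by omega))
        rw [hcy]
        norm_cast
        omega
      calc (⨅ k : Fin n, max (halve (dist wc i k)) (if wc k j = 1 then (⊥:EReal) else ⊤))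
          ≤ max (halve (dist wc i k)) (if wc k j = 1 then (⊥:EReal) else ⊤) := iInf_le _ k
        _ = (((c-1:ℤ):ℝ):EReal) := hfk
    · refine le_iInf fun k' => ?_
      by_cases h1' : wc k' j = 1
      · rw [if_pos h1', max_eq_left bot_le]
        rcases haux k' h1' with htop'' | ⟨y'', hy'', hzy''⟩
        · rw [htop'', halve_top]; exact le_top
        rw [hy'', halve_coe]
        have hle : c - 1 ≤ ⌈(y'':ℝ)/2⌉ := (le_ceil2 y'' (c-1)).mpr (by omega)
        exact_mod_cast hle
      · rw [if_neg h1', max_eq_right le_top]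
        exact le_top


end MinMaxAPSP
end

section
/- Let n ≥ 1, let w : Fin n → Fin n → EReal have all entries in {−1, 0, 1, ⊤}, and let w_c be a canonical graph of w with d_{w_c}(p,q) = d_w(p,q) for all p,q. Fix i, j such that d_w(i,j) is finite and odd (an odd integer). Then there exists a shortest walk from i to j under w_c whose last edge has weight 1 or weight −1. -/
open scoped BigOperators

namespace MinMaxAPSP

lemma walk_int {n ℓ : ℕ} {w : Fin n → Fin n → EReal}
    (hw : EntriesInMinusOneZeroOneTop w) {i j : Fin n} {p : Fin (ℓ+1) → Fin n}
    (hp : IsWalk w i j ℓ p) : ∃ z : ℤ, walkWeight w ℓ p = ((z : ℝ) : EReal) := by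
  have hterm : ∀ k : Fin ℓ, ∃ z : ℤ, w (p k.castSucc) (p k.succ) = ((z:ℝ):EReal) := by
    intro k
    rcases hw (p k.castSucc) (p k.succ) with h | h | h | h
    · exact ⟨-1, by rw [h]; norm_num⟩
    · exact ⟨0, by rw [h]; norm_num⟩
    · exact ⟨1, by rw [h]; norm_num⟩
    · exact absurd h (hp.2.2 k)
  choose g hg using hterm
  refine ⟨∑ k, g k, ?_⟩
  rw [walkWeight]
  push_cast
  have hms : ((∑ x : Fin ℓ, ((g x : ℝ)) : ℝ) : EReal) = ∑ x : Fin ℓ, (((g x : ℝ)) : EReal) :=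
    map_sum (⟨⟨Real.toEReal, EReal.coe_zero⟩, fun a b => EReal.coe_add a b⟩ : ℝ →+ EReal) _ Finset.univ
  rw [hms]
  exact Finset.sum_congr rfl fun k _ => hg k

lemma exists_shortest {n : ℕ} {w : Fin n → Fin n → EReal}
    (hw : EntriesInMinusOneZeroOneTop w) (i j : Fin n) {c : ℤ}
    (h : dist w i j = ((c : ℝ) : EReal)) :
    ∃ ℓ, ∃ p : Fin (ℓ+1) → Fin n, IsShortestWalk w i j ℓ p := by
  set S := {x : EReal | ∃ ℓ, ∃ p : Fin (ℓ+1) → Fin n, IsWalk w i j ℓ p ∧ walkWeight w ℓ p = x}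
    with hS
  have hd : dist w i j = sInf S := rfl
  have hSne : S.Nonempty := by
    by_contra hemp
    rw [Set.not_nonempty_iff_eq_empty] at hemp
    rw [hd, hemp, sInf_empty] at h
    exact (EReal.coe_ne_top _) h.symm
  have hbdd : ∀ z : ℤ, ((z:ℝ):EReal) ∈ S → c ≤ z := by
    intro z hz
    have : dist w i j ≤ ((z:ℝ):EReal) := sInf_le hz
    rw [h] at this
    exact_mod_cast this
  obtain ⟨x, hx⟩ := hSne
  obtain ⟨ℓx, px, hwx, hvx⟩ := hx
  obtain ⟨zx, hzx⟩ := walk_int hw hwx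
  obtain ⟨z0, hz0S, hz0min⟩ := Int.exists_least_of_bdd (P := fun z => ((z:ℝ):EReal) ∈ S)
    ⟨c, hbdd⟩ ⟨zx, ⟨ℓx, px, hwx, hzx⟩⟩
  have hdist : dist w i j = ((z0:ℝ):EReal) := by
    apply le_antisymm (sInf_le hz0S)
    apply le_sInf
    intro b hb
    obtain ⟨ℓb, pb, hwb, hvb⟩ := hb
    obtain ⟨zb, hzb⟩ := walk_int hw hwb
    have : ((zb:ℝ):EReal) ∈ S := ⟨ℓb, pb, hwb, hzb⟩
    have hle : z0 ≤ zb := hz0min zb this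
    rw [← hvb, hzb]
    exact_mod_cast hle
  obtain ⟨ℓ0, p0, hw0, hv0⟩ := hz0S
  exact ⟨ℓ0, p0, hw0, by rw [hv0, hdist]⟩


/-- if the distance is finite and odd, some shortest walk in the canonical
graph ends with an edge of weight `1` or `-1`. -/
theorem stmt6 (n : ℕ) (hn : 1 ≤ n) (w wc : Fin n → Fin n → EReal)
    (hw : EntriesInMinusOneZeroOneTop w)
    (hc : IsCanonical w wc) (hdc : ∀ p q : Fin n, dist wc p q = dist w p q)
    (i j : Fin n) (hodd : ∃ m : ℤ, dist w i j = (((2*m+1 : ℤ) : ℝ) : EReal)) :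
    ∃ ℓ, ∃ p : Fin (ℓ+2) → Fin n, IsShortestWalk wc i j (ℓ+1) p ∧
      (wc (p (Fin.last ℓ).castSucc) (p (Fin.last (ℓ+1))) = 1 ∨ wc (p (Fin.last ℓ).castSucc) (p (Fin.last (ℓ+1))) = -1) := by
  obtain ⟨m, hm⟩ := hodd
  obtain ⟨ℓ, p, hp⟩ := exists_shortest hw i j hm
  obtain ⟨ℓ', hℓ', p', hsp', hweq, hcase⟩ := hc.2 i j ℓ p hp
  have hval : walkWeight wc ℓ' p' = (((2*m+1:ℤ):ℝ):EReal) := by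
    rw [hweq, hp.2, hm]
  have hℓ0 : ℓ' ≠ 0 := by
    rintro rfl
    have h0 : walkWeight wc 0 p' = 0 := by simp [walkWeight]
    rw [h0] at hval
    have : ((0:ℝ):EReal) = (((2*m+1:ℤ):ℝ):EReal) := by rw [← hval]; norm_num
    have : (0:ℝ) = ((2*m+1:ℤ):ℝ) := by exact_mod_cast this
    have : (0:ℤ) = 2*m+1 := by exact_mod_cast this
    omega
  obtain ⟨ℓ'', rfl⟩ := Nat.exists_eq_succ_of_ne_zero hℓ0
  refine ⟨ℓ'', p', hsp', ?_⟩
  have hetop : wc (p' (Fin.last ℓ'').castSucc) (p' (Fin.last (ℓ''+1))) ≠ ⊤ := by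
    have := hsp'.1.2.2 (Fin.last ℓ'')
    rwa [Fin.succ_last] at this
  have hene : wc (p' (Fin.last ℓ'').castSucc) (p' (Fin.last (ℓ''+1))) ≠ 0 := by
    rcases hcase with h1 | hne
    · have hℓ''0 : ℓ'' = 0 := by omega
      subst hℓ''0
      have hsum : walkWeight wc 1 p' = wc (p' (Fin.last 0).castSucc) (p' (Fin.last 1)) := by
        rw [walkWeight, Fin.sum_univ_one]
        congr 1
      intro he0
      rw [hsum, he0] at hval
      have : ((0:ℝ):EReal) = (((2*m+1:ℤ):ℝ):EReal) := by rw [← hval]; norm_num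
      have : (0:ℝ) = ((2*m+1:ℤ):ℝ) := by exact_mod_cast this
      have : (0:ℤ) = 2*m+1 := by exact_mod_cast this
      omega
    · have := hne (Fin.last ℓ'')
      rwa [Fin.succ_last] at this
  rcases hc.1 (p' (Fin.last ℓ'').castSucc) (p' (Fin.last (ℓ''+1))) with h | h | h | h
  · exact Or.inr h
  · exact absurd h hene
  · exact Or.inl h
  · exact absurd h hetop



end MinMaxAPSP
end

section
/- Let n ≥ 1, let w : Fin n → Fin n → EReal have all entries in {−1, 0, 1, ⊤}, write d = d_w and t*(p,q) = halve(d(p,q)), and define x⁺(k,j) = −∞ if w k j = 1 and x⁺(k,j) = ⊤ otherwise. Fix i, j with d(i,j) finite (an integer). Then (t*(i,j) − 1 : EReal) ≤ min over k ∈ Fin n of max(t*(i,k), x⁺(k,j)). -/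
open scoped BigOperators

namespace MinMaxAPSP

lemma dist_le_add_edge {n : ℕ} (w : Fin n → Fin n → EReal) (i k j : Fin n)
    (hkj : w k j ≠ ⊤) {ℓ : ℕ} {p : Fin (ℓ+1) → Fin n} (hp : IsWalk w i k ℓ p) :
    dist w i j ≤ walkWeight w ℓ p + w k j := by
  set q : Fin (ℓ+1+1) → Fin n := Fin.snoc p j with hqdef
  have hq0 : q 0 = i := by
    have : (0 : Fin (ℓ+1+1)) = Fin.castSucc 0 := rfl
    rw [hqdef, this, Fin.snoc_castSucc]
    exact hp.1
  have hqlast : q (Fin.last (ℓ+1)) = j := by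
    rw [hqdef, Fin.snoc_last]
  have hqedge : ∀ m : Fin (ℓ+1), w (q m.castSucc) (q m.succ) ≠ ⊤ := by
    intro m
    refine Fin.lastCases ?_ ?_ m
    · have h1 : q (Fin.last ℓ).castSucc = k := by
        rw [hqdef, Fin.snoc_castSucc]; exact hp.2.1
      have h2 : q (Fin.last ℓ).succ = j := by
        rw [hqdef, Fin.succ_last, Fin.snoc_last]
      rw [h1, h2]; exact hkj
    · intro m'
      have h1 : q m'.castSucc.castSucc = p m'.castSucc := by
        rw [hqdef, Fin.snoc_castSucc]
      have h2 : q m'.castSucc.succ = p m'.succ := by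
        rw [hqdef, Fin.succ_castSucc, Fin.snoc_castSucc]
      rw [h1, h2]; exact hp.2.2 m'
  have hwalk : IsWalk w i j (ℓ+1) q := ⟨hq0, hqlast, hqedge⟩
  have hwt : walkWeight w (ℓ+1) q = walkWeight w ℓ p + w k j := by
    simp only [walkWeight, Fin.sum_univ_castSucc, hqdef, Fin.succ_castSucc,
      Fin.snoc_castSucc, Fin.succ_last, Fin.snoc_last, hp.2.1]
  calc dist w i j ≤ walkWeight w (ℓ+1) q :=
        sInf_le ⟨ℓ+1, q, hwalk, rfl⟩
    _ = walkWeight w ℓ p + w k j := hwt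

lemma ceil_half_le {a b : ℝ} (h : a ≤ b + 1) : ⌈a / 2⌉ ≤ ⌈b / 2⌉ + 1 := by
  have h1 : ⌈a / 2⌉ ≤ ⌈(b + 1) / 2⌉ := Int.ceil_le_ceil (by linarith)
  have h2 : (b + 1) / 2 = b / 2 + 1 / 2 := by ring
  have h3 : ⌈b / 2 + 1 / 2⌉ ≤ ⌈b / 2⌉ + ⌈(1 / 2 : ℝ)⌉ := Int.ceil_add_le _ _
  have h4 : ⌈(1 / 2 : ℝ)⌉ = 1 := by
    rw [Int.ceil_eq_iff] <;> norm_num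
  rw [h2] at h1
  rw [h4] at h3
  omega

/-- `t*(i,j) - 1` lower-bounds the `x⁺` (min,max)-product entry. -/
theorem stmt10 (n : ℕ) (hn : 1 ≤ n) (w : Fin n → Fin n → EReal)
    (hw : EntriesInMinusOneZeroOneTop w)
    (i j : Fin n) (hfin : dist w i j ≠ ⊤ ∧ dist w i j ≠ ⊥) :
    halve (dist w i j) - 1 ≤
      ⨅ k : Fin n, max (halve (dist w i k)) (if w k j = 1 then (⊥ : EReal) else ⊤) := by
  apply le_iInf
  intro k
  by_cases hk : w k j = 1
  · rw [if_pos hk]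
    rw [max_eq_left bot_le]
    by_cases htop : dist w i k = ⊤
    · have hh : halve (dist w i k) = ⊤ := by rw [halve, if_pos htop]
      rw [hh]; exact le_top
    · have key : dist w i j - 1 ≤ dist w i k := by
        apply le_sInf
        rintro x ⟨ℓ, p, hp, rfl⟩
        have h2 := dist_le_add_edge w i k j (by rw [hk]; exact (by rw [← EReal.coe_one]; exact EReal.coe_ne_top 1)) hp
        rw [hk] at h2
        exact (EReal.sub_le_iff_le_add (Or.inl (by rw [← EReal.coe_one]; exact EReal.coe_ne_bot 1)) (Or.inl (by rw [← EReal.coe_one]; exact EReal.coe_ne_top 1))).mpr h2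
      have hbot : dist w i k ≠ ⊥ := by
        intro hb
        rw [hb] at key
        have : dist w i j - 1 = ⊥ := le_bot_iff.mp key
        lift dist w i j to ℝ using ⟨hfin.1, hfin.2⟩ with a
        rw [show ((a : EReal) - 1) = ((a - 1 : ℝ) : EReal) by push_cast; ring] at this
        exact EReal.coe_ne_bot _ this
      lift dist w i j to ℝ using ⟨hfin.1, hfin.2⟩ with a ha
      lift dist w i k to ℝ using ⟨htop, hbot⟩ with b hb
      have hab : a ≤ b + 1 := by
        rw [show ((a : EReal) - 1) = ((a - 1 : ℝ) : EReal) by push_cast; ring] at key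
        have := EReal.coe_le_coe_iff.mp key
        linarith
      have hc := ceil_half_le hab
      simp only [halve]
      rw [if_neg (EReal.coe_ne_top a), if_neg (EReal.coe_ne_bot a),
        if_neg (EReal.coe_ne_top b), if_neg (EReal.coe_ne_bot b),
        EReal.toReal_coe, EReal.toReal_coe]
      rw [show ((((⌈a / 2⌉ : ℤ) : ℝ) : EReal) - 1) = (((((⌈a / 2⌉ : ℤ) : ℝ) - 1 : ℝ)) : EReal) by
        push_cast; ring]
      rw [EReal.coe_le_coe_iff]
      push_cast
      have : ((⌈a / 2⌉ : ℤ) : ℝ) ≤ ((⌈b / 2⌉ + 1 : ℤ) : ℝ) := by exact_mod_cast hc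
      push_cast at this
      linarith
  · rw [if_neg hk, max_eq_right le_top]
    exact le_top


end MinMaxAPSP
end
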